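/- arXiv:2304.00773 — 7 statements merged into one kernel-verified Lean document; each statement's English description precedes it below -/
import Mathlib

section
/- Let ρ ≥ 2 be an integer and let α be the unique real root of x³ − x² − 1. Suppose the nonnegative integers n, d1, d2, d3, ℓ, m, k satisfy n ≥ 1, 1 ≤ k ≤ m ≤ ℓ, d1, d2, d3 ∈ {0, 1, …, ρ−1}, d1 > 0, and (ρ−1)·𝒩_n = d1·ρ^{ℓ+m+k} − (d1−d2)·ρ^{m+k} − (d2−d3)·ρ^k − d3. Then (ℓ+m+k−1)·log ρ + log α < n·log α < (ℓ+m+k)·log ρ + 1, where log denotes the natural logarithm. -/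
/-- The Narayana sequence: 𝒩₀ = 0, 𝒩₁ = 𝒩₂ = 𝒩₃ = 1, 𝒩ₙ = 𝒩ₙ₋₁ + 𝒩ₙ₋₃ for n ≥ 3. -/
def narayana : ℕ → ℕ
  | 0 => 0
  | 1 => 1
  | 2 => 1
  | n + 3 => narayana (n + 2) + narayana n


lemma alpha_gt (α : ℝ) (hroot : α ^ 3 = α ^ 2 + 1) (hα : 1 < α) : (1.45:ℝ) < α := by
  nlinarith [sq_nonneg (α - 1.45), sq_nonneg (α + 1), sq_nonneg α]

lemma alpha_lt (α : ℝ) (hroot : α ^ 3 = α ^ 2 + 1) (hα : 1 < α) : α < 1.47 := by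
  nlinarith [sq_nonneg (α - 1.47), sq_nonneg (α + 1), sq_nonneg α]

lemma narayana_upper (α : ℝ) (hroot : α ^ 3 = α ^ 2 + 1) (hα : 1 < α) :
    ∀ n, 2 ≤ n → α * (narayana n : ℝ) < α ^ n := by
  intro n
  induction n using Nat.strong_induction_on with
  | _ n ih =>
    have key : ∀ j : ℕ, α ^ (j+5) = α ^ (j+4) + α ^ (j+2) := by
      intro j
      calc α ^ (j+5) = α ^ (j+2) * α ^ 3 := by ring
        _ = α ^ (j+2) * (α^2 + 1) := by rw [hroot]
        _ = α ^ (j+4) + α ^ (j+2) := by ring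
    rcases n with _|_|_|_|_|n
    · omega
    · omega
    · intro _; norm_num [narayana]; nlinarith
    · intro _; norm_num [narayana]; nlinarith
    · intro _; norm_num [narayana]; nlinarith
    · intro _
      have h2 := ih (n+4) (by omega) (by omega)
      have h0 := ih (n+2) (by omega) (by omega)
      have hrec : narayana (n+5) = narayana (n+4) + narayana (n+2) := rfl
      rw [hrec, key n]
      push_cast
      linarith

lemma narayana_lower (α : ℝ) (hroot : α ^ 3 = α ^ 2 + 1) (hα : 1 < α) :
    ∀ n, 4 ≤ n → 4 * α ^ n ≤ α ^ 6 * (narayana n : ℝ) := by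
  intro n
  have h145 := alpha_gt α hroot hα
  induction n using Nat.strong_induction_on with
  | _ n ih =>
    have key : ∀ j : ℕ, α ^ (j+7) = α ^ (j+6) + α ^ (j+4) := by
      intro j
      calc α ^ (j+7) = α ^ (j+4) * α ^ 3 := by ring
        _ = α ^ (j+4) * (α^2 + 1) := by rw [hroot]
        _ = α ^ (j+6) + α ^ (j+4) := by ring
    rcases n with _|_|_|_|_|_|_|n
    · omega
    · omega
    · omega
    · omega
    · intro _; norm_num [narayana]; nlinarith
    · intro _; norm_num [narayana]; nlinarith
    · intro _; norm_num [narayana]; nlinarith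
    · intro _
      have h2 := ih (n+6) (by omega) (by omega)
      have h0 := ih (n+4) (by omega) (by omega)
      have hrec : narayana (n+7) = narayana (n+6) + narayana (n+4) := rfl
      rw [hrec, key n]
      push_cast
      linarith

set_option maxHeartbeats 1000000 in
theorem narayana_concat_log_bounds
    (ρ n d1 d2 d3 ℓ m k : ℕ) (α : ℝ)
    (hroot : α ^ 3 = α ^ 2 + 1) (hα : 1 < α)
    (hρ : 2 ≤ ρ) (hn : 1 ≤ n)
    (hk : 1 ≤ k) (hkm : k ≤ m) (hmℓ : m ≤ ℓ)
    (hd1pos : 0 < d1) (hd1 : d1 < ρ) (hd2 : d2 < ρ) (hd3 : d3 < ρ)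
    (heq : ((ρ : ℤ) - 1) * (narayana n : ℤ) =
        (d1 : ℤ) * (ρ : ℤ) ^ (ℓ + m + k) - ((d1 : ℤ) - (d2 : ℤ)) * (ρ : ℤ) ^ (m + k)
          - ((d2 : ℤ) - (d3 : ℤ)) * (ρ : ℤ) ^ k - (d3 : ℤ)) :
    ((ℓ + m + k : ℝ) - 1) * Real.log ρ + Real.log α < (n : ℝ) * Real.log α ∧
      (n : ℝ) * Real.log α < (ℓ + m + k : ℝ) * Real.log ρ + 1 := by
  have hℓ1 : 1 ≤ ℓ := le_trans (le_trans hk hkm) hmℓ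
  obtain ⟨l', rfl⟩ : ∃ l', ℓ = l' + 1 := ⟨ℓ - 1, by omega⟩
  have hR : (2:ℤ) ≤ (ρ:ℤ) := by exact_mod_cast hρ
  set R : ℤ := (ρ : ℤ) with hRdef
  set N : ℤ := (narayana n : ℤ) with hNdef
  have h1k : (1:ℤ) ≤ R ^ k := one_le_pow₀ (by linarith)
  have h1l : (1:ℤ) ≤ R ^ l' := one_le_pow₀ (by linarith)
  have h12 : R ^ k ≤ R ^ (m + k) := pow_le_pow_right₀ (by linarith) (by omega)
  have h23 : R ^ (m + k) ≤ R ^ (l' + 1 + m + k) := pow_le_pow_right₀ (by linarith) (by omega)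
  have hform : (R - 1) * N =
      (d1:ℤ) * (R ^ (l'+1+m+k) - R ^ (m+k)) + (d2:ℤ) * (R ^ (m+k) - R ^ k)
        + (d3:ℤ) * (R ^ k - 1) := by linear_combination heq
  -- upper bound N ≤ R^L - 1
  have hd1i : (d1:ℤ) ≤ R - 1 := by simp only [hRdef]; omega
  have hd2i : (d2:ℤ) ≤ R - 1 := by simp only [hRdef]; omega
  have hd3i : (d3:ℤ) ≤ R - 1 := by simp only [hRdef]; omega
  have hd1i' : (1:ℤ) ≤ (d1:ℤ) := by exact_mod_cast hd1pos
  have hd2i' : (0:ℤ) ≤ (d2:ℤ) := by positivity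
  have hd3i' : (0:ℤ) ≤ (d3:ℤ) := by positivity
  have t1 : (d1:ℤ) * (R ^ (l'+1+m+k) - R ^ (m+k)) ≤ (R-1) * (R ^ (l'+1+m+k) - R ^ (m+k)) :=
    mul_le_mul_of_nonneg_right hd1i (by linarith)
  have t2 : (d2:ℤ) * (R ^ (m+k) - R ^ k) ≤ (R-1) * (R ^ (m+k) - R ^ k) :=
    mul_le_mul_of_nonneg_right hd2i (by linarith)
  have t3 : (d3:ℤ) * (R ^ k - 1) ≤ (R-1) * (R ^ k - 1) :=
    mul_le_mul_of_nonneg_right hd3i (by linarith)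
  have hsum : (R-1) * (R ^ (l'+1+m+k) - R ^ (m+k)) + (R-1) * (R ^ (m+k) - R ^ k)
      + (R-1) * (R ^ k - 1) = (R-1) * (R ^ (l'+1+m+k) - 1) := by ring
  have hmulub : (R - 1) * N ≤ (R - 1) * (R ^ (l'+1+m+k) - 1) := by
    rw [hform]; linarith
  have hNle : N ≤ R ^ (l'+1+m+k) - 1 :=
    le_of_mul_le_mul_left hmulub (by linarith)
  -- lower bound R^(l'+m+k) ≤ N
  have s1 : (R ^ (l'+1+m+k) - R ^ (m+k)) ≤ (d1:ℤ) * (R ^ (l'+1+m+k) - R ^ (m+k)) :=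
    le_mul_of_one_le_left (by linarith) hd1i'
  have s2 : (0:ℤ) ≤ (d2:ℤ) * (R ^ (m+k) - R ^ k) := mul_nonneg hd2i' (by linarith)
  have s3 : (0:ℤ) ≤ (d3:ℤ) * (R ^ k - 1) := mul_nonneg hd3i' (by linarith)
  have hsplit1 : R ^ (l'+1+m+k) = R ^ (l'+1) * R ^ (m+k) := by
    rw [← pow_add]; ring_nf
  have hsplit2 : R ^ (l'+m+k) = R ^ l' * R ^ (m+k) := by
    rw [← pow_add]; ring_nf
  have hpowA : (R-1) * R ^ l' ≤ R ^ (l'+1) - 1 := by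
    have : R ^ (l'+1) = R * R ^ l' := by rw [pow_succ]; ring
    nlinarith
  have hRmk : (0:ℤ) < R ^ (m+k) := by positivity
  have hmullb : (R - 1) * R ^ (l'+m+k) ≤ (R - 1) * N := by
    have hmm : ((R-1) * R ^ l') * R ^ (m+k) ≤ ((R ^ (l'+1) - 1)) * R ^ (m+k) :=
      mul_le_mul_of_nonneg_right hpowA (le_of_lt hRmk)
    have e1 : (R - 1) * R ^ (l'+m+k) = ((R-1) * R ^ l') * R ^ (m+k) := by
      rw [hsplit2]; ring
    have e2 : (R ^ (l'+1) - 1) * R ^ (m+k) = R ^ (l'+1+m+k) - R ^ (m+k) := by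
      rw [hsplit1]; ring
    rw [hform, e1]
    linarith [hmm, s1, s2, s3, e2]
  have hNge : R ^ (l'+m+k) ≤ N := le_of_mul_le_mul_left hmullb (by linarith)
  -- N ≥ 4
  have hN4 : (4:ℤ) ≤ N := by
    have h2e : R ^ 2 ≤ R ^ (l'+m+k) := pow_le_pow_right₀ (by linarith) (by omega)
    have h4 : (4:ℤ) ≤ R ^ 2 := by nlinarith [hR]
    linarith [h2e, hNge]
  have hN4n : 4 ≤ narayana n := by
    have h := hN4; rw [hNdef] at h; exact_mod_cast h
  have hn4 : 4 ≤ n := by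
    by_contra h
    push_neg at h
    interval_cases n <;> norm_num [narayana] at hN4n
  -- real versions
  have hαpos : (0:ℝ) < α := by linarith
  have hρR : (2:ℝ) ≤ (ρ:ℝ) := by exact_mod_cast hρ
  have hρpos : (0:ℝ) < (ρ:ℝ) := by linarith
  have hNleR : ((narayana n : ℝ)) ≤ (ρ:ℝ) ^ (l'+1+m+k) := by
    have h : N ≤ R ^ (l'+1+m+k) := by linarith
    rw [hNdef, hRdef] at h; exact_mod_cast h
  have hNgeR : (ρ:ℝ) ^ (l'+m+k) ≤ (narayana n : ℝ) := by
    have h := hNge; rw [hNdef, hRdef] at h; exact_mod_cast h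
  constructor
  · -- left inequality
    have hup := narayana_upper α hroot hα n (by omega)
    have hl1 : α * (ρ:ℝ) ^ (l'+m+k) < α ^ n :=
      lt_of_le_of_lt (mul_le_mul_of_nonneg_left hNgeR (by linarith)) hup
    have hlog := Real.log_lt_log (by positivity) hl1
    rw [Real.log_mul (by linarith) (by positivity), Real.log_pow, Real.log_pow] at hlog
    push_cast at hlog ⊢
    nlinarith [hlog]
  · -- right inequality
    have hlo := narayana_lower α hroot hα n hn4
    have h147 := alpha_lt α hroot hα
    have hα6 : α ^ 6 < 4 * Real.exp 1 := by
      have h6 : α ^ 6 < 1.47 ^ 6 := by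
        apply pow_lt_pow_left₀ h147 (by linarith)
        norm_num
      nlinarith [Real.exp_one_gt_d9]
    have hρL : (0:ℝ) < (ρ:ℝ) ^ (l'+1+m+k) := by positivity
    have hkey : α ^ n < Real.exp 1 * (ρ:ℝ) ^ (l'+1+m+k) := by
      have h1 : 4 * α ^ n ≤ α ^ 6 * (ρ:ℝ) ^ (l'+1+m+k) := by
        calc 4 * α ^ n ≤ α ^ 6 * (narayana n : ℝ) := hlo
          _ ≤ α ^ 6 * (ρ:ℝ) ^ (l'+1+m+k) := by
            apply mul_le_mul_of_nonneg_left hNleR (by positivity)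
      nlinarith
    have hlog := Real.log_lt_log (by positivity) hkey
    rw [Real.log_pow, Real.log_mul (Real.exp_ne_zero 1) (by positivity), Real.log_exp,
      Real.log_pow] at hlog
    push_cast at hlog ⊢
    linarith
end

section
/- Let α be the unique real root of x³ − x² − 1 and set a = α²/(α³ + 2). Then for every integer n > 1, |𝒩_n − a·αⁿ| < α^{−n/2}. -/
theorem narayana_sub_leading_term_small
    (α : ℝ) (hroot : α ^ 3 = α ^ 2 + 1) (hα : 1 < α)
    (a : ℝ) (ha : a = α ^ 2 / (α ^ 3 + 2))
    (n : ℕ) (hn : 1 < n) :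
    |(narayana n : ℝ) - a * α ^ n| < α ^ (-(n : ℝ) / 2) := by
  have hα0 : (0:ℝ) < α := lt_trans one_pos hα
  have hne : α ≠ 0 := ne_of_gt hα0
  have hden : α ^ 3 + 2 ≠ 0 := by positivity
  set E : ℕ → ℝ := fun k => (narayana k : ℝ) - a * α ^ k with hE
  have hEn : ∀ k, E k = (narayana k : ℝ) - a * α ^ k := fun k => rfl
  have hE3 : ∀ k, E (k + 3) = E (k + 2) + E k := by
    intro k
    have hp : α ^ (k + 3) = α ^ (k + 2) + α ^ k := by
      have h : α ^ (k + 3) = α ^ k * α ^ 3 := by ring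
      rw [h, hroot]; ring
    simp only [hEn, narayana]
    push_cast
    rw [hp]; ring
  have hE0 : E 0 = -a := by simp [hEn, narayana]
  have hE1 : E 1 = 1 - a * α := by simp [hEn, narayana]
  have hE2 : E 2 = 1 - a * α ^ 2 := by simp [hEn, narayana]
  have hE3v : E 3 = 1 - a * α ^ 3 := by
    have h : narayana 3 = 1 := rfl
    simp [hEn, h]
  clear_value E
  clear hE
  -- quadratic recurrence (scaled by α to avoid inverses)
  have hF' : ∀ k, α * E (k + 2) = (α - α ^ 2) * E (k + 1) - E k := by
    intro k
    induction k using Nat.strong_induction_on with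
    | _ k ih =>
      match k with
      | 0 =>
        rw [hE2, hE1, hE0, ha]
        field_simp
        linear_combination (-α) * hroot
      | 1 =>
        rw [hE3v, hE2, hE1, ha]
        field_simp
        linear_combination (-2*α^3 - 2) * hroot
      | (m + 2) =>
        have h2 := ih m (by omega)
        have e1 : E (m + 4) = E (m + 3) + E (m + 1) := by simpa using hE3 (m + 1)
        have e2 : E (m + 3) = E (m + 2) + E m := hE3 m
        show α * E (m + 4) = (α - α ^ 2) * E (m + 3) - E (m + 2)
        linear_combination α * e1 + α ^ 2 * e2 + α ^ 2 * h2 + (-(E (m + 2)) - α * E (m + 1)) * hroot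
  have hF : ∀ k, E (k + 2) = (1 - α) * E (k + 1) - (1/α) * E k := by
    intro k
    have h := hF' k
    field_simp
    linear_combination h
  -- quadratic form
  set Q : ℕ → ℝ := fun k => (1/α) * E k ^ 2 - (1 - α) * E k * E (k + 1) + E (k + 1) ^ 2 with hQ
  have hQrec : ∀ k, Q (k + 1) = (1/α) * Q k := by
    intro k
    simp only [hQ]
    rw [hF k]
    field_simp
    ring
  have hQval : ∀ k, Q k = (1/α) ^ k * (1 / (α ^ 2 + 3)) := by
    have hQ0 : Q 0 = 1 / (α ^ 2 + 3) := by
      simp only [hQ]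
      rw [hE0, hE1, ha]
      have h23 : α ^ 2 + 3 ≠ 0 := by positivity
      field_simp
      linear_combination (-8 - 2*α^2 - α^3) * hroot
    intro k
    induction k with
    | zero => simpa using hQ0
    | succ m ihm => rw [hQrec m, ihm]; ring
  -- strict gap between Q 0 and the coercivity constant
  have hc : 1 / (α ^ 2 + 3) < 1/α - (1 - α) ^ 2 / 4 := by
    have e : 1/α - (1 - α) ^ 2 / 4 - 1/(α ^ 2 + 3)
        = (-α^5 + 2*α^4 - 4*α^3 + 10*α^2 - 7*α + 12)/(4*α*(α^2+3)) := by
      field_simp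
      ring
    have hnum2 : -α^5 + 2*α^4 - 4*α^3 + 10*α^2 - 7*α + 12 = 6*α^2 - 6*α + 9 := by
      linear_combination (-3 + α - α^2) * hroot
    have hnum : (0:ℝ) < -α^5 + 2*α^4 - 4*α^3 + 10*α^2 - 7*α + 12 := by
      rw [hnum2]; nlinarith [sq_nonneg (2*α - 1)]
    have hpos : (0:ℝ) < 1/α - (1 - α) ^ 2 / 4 - 1/(α ^ 2 + 3) := by
      rw [e]; positivity
    linarith
  have hEbound : ∀ k, E k ^ 2 < (1/α) ^ k := by
    intro k
    have key : (1/α - (1 - α) ^ 2 / 4) * E k ^ 2 ≤ Q k := by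
      have h : Q k = (E (k+1) - (1 - α) * E k / 2) ^ 2 + (1/α - (1 - α) ^ 2 / 4) * E k ^ 2 := by
        simp only [hQ]; ring
      nlinarith [sq_nonneg (E (k+1) - (1 - α) * E k / 2)]
    have hpow : (0:ℝ) < (1/α) ^ k := by positivity
    have h1 : (1/α - (1 - α) ^ 2 / 4) * E k ^ 2 < (1/α) ^ k * (1/α - (1 - α) ^ 2 / 4) := by
      calc (1/α - (1 - α) ^ 2 / 4) * E k ^ 2 ≤ Q k := key
        _ = (1/α) ^ k * (1 / (α ^ 2 + 3)) := hQval k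
        _ < (1/α) ^ k * (1/α - (1 - α) ^ 2 / 4) := mul_lt_mul_of_pos_left hc hpow
    have hcpos : (0:ℝ) < 1/α - (1 - α) ^ 2 / 4 := lt_trans (by positivity) hc
    nlinarith
  -- conclude
  have hrp : (0:ℝ) < α ^ (-(n : ℝ) / 2) := Real.rpow_pos_of_pos hα0 _
  have hsq : (α ^ (-(n : ℝ) / 2)) ^ 2 = (1/α) ^ n := by
    have s1 : (α ^ (-(n : ℝ) / 2)) ^ 2 = α ^ ((-(n : ℝ) / 2) * (2:ℕ)) := by
      rw [← Real.rpow_natCast (α ^ (-(n : ℝ) / 2)) 2, ← Real.rpow_mul hα0.le]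
    rw [s1]
    have s2 : (-(n : ℝ) / 2) * (2:ℕ) = -(n : ℝ) := by push_cast; ring
    rw [s2, Real.rpow_neg hα0.le, Real.rpow_natCast]
    rw [one_div, inv_pow]
  have habs : |E n| ^ 2 < (α ^ (-(n : ℝ) / 2)) ^ 2 := by
    rw [hsq, sq_abs]; exact hEbound n
  have hfin := lt_of_pow_lt_pow_left₀ 2 hrp.le habs
  rw [show ((narayana n : ℝ) - a * α ^ n) = E n from (hEn n).symm]
  exact hfin
end

section
/- Let α be the unique real root of x³ − x² − 1 and set a = α²/(α³ + 2). Then for all integers n ≥ 0, ρ ≥ 2, s ≥ 1, and d1 ≥ 1, one has (ρ − 1)·a·αⁿ ≠ d1·ρ^s. (Equivalently, the quantity Λ₁ = ((ρ−1)a/d1)·αⁿ·ρ^{−s} − 1 is nonzero.) -/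
/-- integer equation u²v + v³ = u³ has no solution with v ≠ 0 -/
lemma no_int_sol (u v : ℤ) (hv : v ≠ 0) : u ^ 2 * v + v ^ 3 ≠ u ^ 3 := by
  intro h
  set g : ℕ := Int.gcd u v with hg
  have hgpos : 0 < g := Int.gcd_pos_of_ne_zero_right u hv
  set b : ℤ := u / g with hb
  set c : ℤ := v / g with hc
  have hub : u = g * b := (Int.mul_ediv_cancel' (Int.gcd_dvd_left u v)).symm
  have hvc : v = g * c := (Int.mul_ediv_cancel' (Int.gcd_dvd_right u v)).symm
  have hcop : Int.gcd b c = 1 := Int.gcd_div_gcd_div_gcd hgpos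
  have hgne : (g:ℤ) ^ 3 ≠ 0 := by positivity
  have heq : b ^ 2 * c + c ^ 3 = b ^ 3 := by
    have : (g:ℤ)^3 * (b ^ 2 * c + c ^ 3) = (g:ℤ)^3 * b ^ 3 := by
      rw [hub, hvc] at h; ring_nf at h ⊢; linarith
    exact mul_left_cancel₀ hgne this
  have hcopr : IsCoprime b c := Int.isCoprime_iff_gcd_eq_one.mpr hcop
  have hcdvd : c ∣ b ^ 3 := ⟨b ^ 2 + c ^ 2, by linarith [heq]⟩
  have hbdvd : b ∣ c ^ 3 := ⟨b * (b - c), by ring_nf; linarith [heq]⟩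
  have hcu : IsUnit c := (hcopr.symm.pow_right).isUnit_of_dvd hcdvd
  have hbu : IsUnit b := (hcopr.pow_right).isUnit_of_dvd hbdvd
  rcases Int.isUnit_iff.mp hcu with h1 | h1 <;>
    rcases Int.isUnit_iff.mp hbu with h2 | h2 <;> rw [h1, h2] at heq <;> norm_num at heq

/-- integer equation c³ = b(b+c)² has no solution with c ≠ 0 -/
lemma no_int_sol2 (B C : ℤ) (hC : C ≠ 0) : C ^ 3 ≠ B * (B + C) ^ 2 := by
  intro h
  set g : ℕ := Int.gcd B C with hg
  have hgpos : 0 < g := Int.gcd_pos_of_ne_zero_right B hC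
  set b : ℤ := B / g with hb
  set c : ℤ := C / g with hc
  have hub : B = g * b := (Int.mul_ediv_cancel' (Int.gcd_dvd_left B C)).symm
  have hvc : C = g * c := (Int.mul_ediv_cancel' (Int.gcd_dvd_right B C)).symm
  have hcop : Int.gcd b c = 1 := Int.gcd_div_gcd_div_gcd hgpos
  have hgne : (g:ℤ) ^ 3 ≠ 0 := by positivity
  have heq : c ^ 3 = b * (b + c) ^ 2 := by
    have : (g:ℤ)^3 * (c ^ 3) = (g:ℤ)^3 * (b * (b + c) ^ 2) := by
      rw [hub, hvc] at h; ring_nf at h ⊢; linarith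
    exact mul_left_cancel₀ hgne this
  have hcopr : IsCoprime b c := Int.isCoprime_iff_gcd_eq_one.mpr hcop
  have hcdvd : c ∣ b ^ 3 := ⟨c ^ 2 - 2 * b ^ 2 - b * c, by ring_nf; nlinarith [heq]⟩
  have hbdvd : b ∣ c ^ 3 := ⟨(b + c) ^ 2, heq⟩
  have hcu : IsUnit c := (hcopr.symm.pow_right).isUnit_of_dvd hcdvd
  have hbu : IsUnit b := (hcopr.pow_right).isUnit_of_dvd hbdvd
  rcases Int.isUnit_iff.mp hcu with h1 | h1 <;>
    rcases Int.isUnit_iff.mp hbu with h2 | h2 <;> rw [h1, h2] at heq <;> norm_num at heq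

lemma not_rat (α : ℝ) (hroot : α ^ 3 = α ^ 2 + 1) (u v : ℤ) (hv : v ≠ 0) :
    α * (v:ℝ) ≠ (u:ℝ) := by
  intro h
  have hv' : (v:ℝ) ≠ 0 := Int.cast_ne_zero.mpr hv
  have key : (u:ℝ) ^ 2 * v + v ^ 3 = u ^ 3 := by
    rw [← h]; linear_combination (-(v:ℝ) ^ 3) * hroot
  exact no_int_sol u v hv (by exact_mod_cast key)

/-- 1, α, α² are ℤ-linearly independent -/
lemma indep (α : ℝ) (hroot : α ^ 3 = α ^ 2 + 1) (A B C : ℤ)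
    (h : (A:ℝ) + B * α + C * α ^ 2 = 0) : A = 0 ∧ B = 0 ∧ C = 0 := by
  by_cases hC : C = 0
  · subst hC
    by_cases hB : B = 0
    · subst hB
      refine ⟨by exact_mod_cast (by linear_combination h : (A:ℝ) = 0), rfl, rfl⟩
    · exfalso
      exact not_rat α hroot (-A) B hB (by push_cast; linear_combination h)
  · exfalso
    have h1 : (C:ℝ) + A * α + ((B:ℝ) + C) * α ^ 2 = 0 := by
      linear_combination α * h - (C:ℝ) * hroot
    set X : ℤ := C ^ 2 - A * (B + C) with hXdef
    set Y : ℤ := A * C - B * (B + C) with hYdef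
    have h2 : (X:ℝ) + (Y:ℝ) * α = 0 := by
      rw [hXdef, hYdef]; push_cast
      linear_combination (C:ℝ) * h1 - ((B:ℝ) + C) * h
    by_cases hY : Y = 0
    · have hX : X = 0 := by
        have : (X:ℝ) = 0 := by rw [hY] at h2; push_cast at h2; linear_combination h2
        exact_mod_cast this
      have e1 : A * C = B * (B + C) := by omega
      have e2 : C ^ 2 = A * (B + C) := by omega
      have e3 : C ^ 3 = B * (B + C) ^ 2 := by linear_combination C * e2 + (B + C) * e1
      exact no_int_sol2 B C hC e3
    · exact not_rat α hroot (-X) Y hY (by push_cast; linear_combination h2)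

/-- coefficients of αᵏ in basis 1, α, α² -/
def trip : ℕ → ℤ × ℤ × ℤ
  | 0 => (1, 0, 0)
  | k + 1 => ((trip k).2.2, (trip k).1, (trip k).2.1 + (trip k).2.2)

lemma trip_spec (α : ℝ) (hroot : α ^ 3 = α ^ 2 + 1) :
    ∀ k, α ^ k = ((trip k).1 : ℝ) + ((trip k).2.1 : ℝ) * α + ((trip k).2.2 : ℝ) * α ^ 2 := by
  intro k
  induction k with
  | zero => simp [trip]
  | succ k ih =>
    rw [pow_succ, ih]
    show _ = (((trip k).2.2 : ℝ)) + ((trip k).1 : ℝ) * α + (((trip k).2.1 + (trip k).2.2 : ℤ) : ℝ) * α ^ 2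
    push_cast
    linear_combination ((trip k).2.2 : ℝ) * hroot

lemma trip_pos : ∀ k, 1 ≤ (trip (k + 4)).1 ∧ 1 ≤ (trip (k + 4)).2.1 ∧ 1 ≤ (trip (k + 4)).2.2 := by
  intro k
  induction k with
  | zero => norm_num [trip]
  | succ k ih =>
    obtain ⟨h1, h2, h3⟩ := ih
    have e : k + 1 + 4 = (k + 4) + 1 := by omega
    rw [e]
    have e2 : trip ((k + 4) + 1) =
        ((trip (k + 4)).2.2, (trip (k + 4)).1, (trip (k + 4)).2.1 + (trip (k + 4)).2.2) := rfl
    rw [e2]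
    dsimp only
    exact ⟨h3, h1, by omega⟩

theorem Lambda_one_ne_zero
    (α : ℝ) (hroot : α ^ 3 = α ^ 2 + 1) (hα : 1 < α)
    (a : ℝ) (ha : a = α ^ 2 / (α ^ 3 + 2))
    (n ρ s d1 : ℕ) (hρ : 2 ≤ ρ) (hs : 1 ≤ s) (hd1 : 1 ≤ d1) :
    ((ρ : ℝ) - 1) * a * α ^ n ≠ (d1 : ℝ) * (ρ : ℝ) ^ s := by
  intro h
  have hden : α ^ 3 + 2 ≠ 0 := by nlinarith
  rw [ha] at h
  set K : ℤ := (ρ : ℤ) - 1 with hK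
  set M : ℤ := (d1 : ℤ) * (ρ : ℤ) ^ s with hM
  have hKpos : 1 ≤ K := by
    have : (2 : ℤ) ≤ (ρ : ℤ) := by exact_mod_cast hρ
    omega
  have hMpos : 1 ≤ M := by
    have h1 : (1 : ℤ) ≤ (d1 : ℤ) := by exact_mod_cast hd1
    have h2 : (1 : ℤ) ≤ (ρ : ℤ) ^ s := one_le_pow₀ (by exact_mod_cast hρ.trans' (by norm_num))
    nlinarith
  -- main real equation: K * α^(n+2) = M * α² + 3M
  have hmain : (K : ℝ) * α ^ (n + 2) = (M : ℝ) * α ^ 2 + 3 * (M : ℝ) := by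
    have h' : ((ρ : ℝ) - 1) * α ^ 2 * α ^ n = (d1 : ℝ) * (ρ : ℝ) ^ s * (α ^ 3 + 2) := by
      field_simp at h
      linarith [h]
    push_cast [hK, hM]
    linear_combination h' + (d1 : ℝ) * (ρ : ℝ) ^ s * hroot
  have hspec := trip_spec α hroot (n + 2)
  set p := (trip (n + 2)).1 with hp
  set q := (trip (n + 2)).2.1 with hq'
  set r := (trip (n + 2)).2.2 with hr
  have hzero : ((K * p - 3 * M : ℤ) : ℝ) + ((K * q : ℤ) : ℝ) * α + ((K * r - M : ℤ) : ℝ) * α ^ 2 = 0 := by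
    rw [hspec] at hmain
    push_cast
    linear_combination hmain
  obtain ⟨hA, hB, hC⟩ := indep α hroot _ _ _ hzero
  have hq0 : q = 0 := by
    rcases mul_eq_zero.mp hB with h0 | h0
    · omega
    · exact h0
  rcases n with _ | _ | m
  · have ht : trip (0 + 2) = (0, 0, 1) := by decide
    rw [hp, ht] at hA
    simp at hA
    omega
  · have ht : trip (1 + 2) = (1, 0, 1) := by decide
    rw [hp, ht] at hA
    rw [hr, ht] at hC
    simp at hA hC
    omega
  · have hpos := trip_pos m
    have e : m + 2 + 2 = m + 4 := by omega
    rw [hq', e] at hq0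
    omega
end

section
/- Let α be the unique real root of x³ − x² − 1 and set a = α²/(α³ + 2). Then for all integers n ≥ 0, ρ ≥ 2, ℓ ≥ 1, m ≥ 1, k ≥ 1, and digits d1, d2 with 1 ≤ d1 ≤ ρ−1 and 0 ≤ d2 ≤ ρ−1, one has (ρ − 1)·a·αⁿ ≠ (d1·ρ^ℓ − (d1 − d2))·ρ^{m+k}. (Equivalently, the quantity Λ₂ = ((ρ−1)a/(d1·ρ^ℓ − (d1−d2)))·αⁿ·ρ^{−m−k} − 1 is nonzero.) -/
lemma cubic_den_one (a b c : ℤ) (q : ℚ) (h : q^3 + a*q^2 + b*q + c = 0) : q.den = 1 := by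
  have hd : (q.den : ℚ) ≠ 0 := by exact_mod_cast q.den_ne_zero
  have h2 : (q.num:ℚ)^3 + a*q.num^2*q.den + b*q.num*q.den^2 + c*q.den^3 = 0 := by
    have hh := h
    rw [← Rat.num_div_den q] at hh
    field_simp at hh
    have h0 : (q.den:ℚ)^3 * ((q.num:ℚ)^3 + a*q.num^2*q.den + b*q.num*q.den^2 + c*q.den^3) = 0 := by
      linear_combination (q.den:ℚ)^3 * hh
    exact (mul_eq_zero.mp h0).resolve_left (pow_ne_zero 3 hd)
  have h3 : q.num^3 + a*q.num^2*q.den + b*q.num*q.den^2 + c*q.den^3 = 0 := by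
    exact_mod_cast h2
  have hdvd : (q.den : ℤ) ∣ q.num^3 :=
    ⟨-(a*q.num^2 + b*q.num*q.den + c*q.den^2), by linarith [h3, mul_comm (q.den:ℤ) (-(a*q.num^2 + b*q.num*q.den + c*q.den^2))]⟩
  have hdvd' : q.den ∣ q.num.natAbs^3 := by
    have := Int.natAbs_dvd_natAbs.mpr hdvd
    simpa [Int.natAbs_pow] using this
  exact Nat.Coprime.eq_one_of_dvd ((q.reduced.pow_left 3).symm) hdvd'

lemma alpha_irr (α : ℝ) (hroot : α ^ 3 = α ^ 2 + 1) : Irrational α := by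
  rintro ⟨q, rfl⟩
  have hq : (q:ℝ)^3 + (-1:ℤ)*(q:ℝ)^2 + (0:ℤ)*(q:ℝ) + (-1:ℤ) = 0 := by push_cast; linarith
  have hq' : q^3 + (-1:ℤ)*q^2 + (0:ℤ)*q + ((-1:ℤ):ℚ) = 0 := by exact_mod_cast hq
  have hden := cubic_den_one _ _ _ q hq'
  have hqint : (q.num : ℚ) = q := by
    conv_rhs => rw [← Rat.num_div_den q]
    rw [hden]; simp
  have : (q.num:ℚ)^3 = (q.num:ℚ)^2 + 1 := by
    rw [hqint]
    have : (q:ℝ)^3 = (q:ℝ)^2 + 1 := hroot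
    exact_mod_cast this
  have hn : q.num^3 = q.num^2 + 1 := by exact_mod_cast this
  rcases le_or_gt q.num 1 with h | h
  · nlinarith [sq_nonneg q.num]
  · nlinarith [sq_nonneg q.num]

lemma not_rat_s13 (α : ℝ) (hirr : Irrational α) (D E : ℤ) (h : (D:ℝ) * α = E) : D = 0 ∧ E = 0 := by
  by_cases hD : D = 0
  · subst hD; simp at h; constructor; rfl; exact_mod_cast h.symm
  · exfalso
    have : α = ((E / D : ℚ) : ℝ) := by
      push_cast
      have hD' : (D:ℝ) ≠ 0 := Int.cast_ne_zero.mpr hD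
      field_simp
      linarith [h]
    exact hirr ⟨E/D, this.symm⟩

lemma lin_indep (α : ℝ) (hroot : α ^ 3 = α ^ 2 + 1) (A B C : ℤ)
    (h : (A:ℝ)*α^2 + B*α + C = 0) : A = 0 ∧ B = 0 ∧ C = 0 := by
  have hirr := alpha_irr α hroot
  have eq2 : ((A:ℝ)+B)*α^2 + (C:ℝ)*α + A = 0 := by
    have : (A:ℝ)*α^3 + B*α^2 + C*α = 0 := by linear_combination α * h
    rw [hroot] at this; linarith
  have key : (((A+B)*B - A*C : ℤ):ℝ) * α = ((A*A - (A+B)*C : ℤ):ℝ) := by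
    push_cast
    linear_combination (A+B:ℝ) * h - (A:ℝ) * eq2
  obtain ⟨hD, hE⟩ := not_rat_s13 α hirr _ _ key
  by_cases hA : A = 0
  · subst hA
    simp at hD hE ⊢
    have hB : B = 0 := by nlinarith [hD]
    subst hB
    simp at h
    exact ⟨rfl, by exact_mod_cast h⟩
  · exfalso
    by_cases hAB : A + B = 0
    · have hAC : A * C = 0 := by have h5 := hD; rw [hAB] at h5; simpa using h5
      have hC : C = 0 := (mul_eq_zero.mp hAC).resolve_left hA
      rw [hC] at hE
      have : A * A = 0 := by simpa using hE
      exact hA (by simpa [mul_self_eq_zero] using this)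
    · have k1 : (A+B)*B = A*C := by linarith
      have k2 : (A+B)*C = A*A := by linarith
      have k3 : B*(A+B)^2 = A^3 := by linear_combination (A+B)*k1 + A*k2
      have hA' : (A:ℚ) ≠ 0 := Int.cast_ne_zero.mpr hA
      set t : ℚ := (B:ℚ)/(A:ℚ) with ht
      have h9 : (B:ℚ)^3 + 2*(A:ℚ)*(B:ℚ)^2 + (A:ℚ)^2*(B:ℚ) - (A:ℚ)^3 = 0 := by
        have : B^3 + 2*A*B^2 + A^2*B - A^3 = 0 := by linear_combination k3
        exact_mod_cast this
      have htq : t^3 + (2:ℤ)*t^2 + (1:ℤ)*t + ((-1:ℤ):ℚ) = 0 := by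
        rw [ht]
        push_cast
        rw [div_pow, div_pow]
        field_simp
        linear_combination h9
      have hden := cubic_den_one _ _ _ t htq
      have htint : (t.num : ℚ) = t := by
        conv_rhs => rw [← Rat.num_div_den t]; rw [hden]; simp
      have hint : t.num^3 + 2*t.num^2 + t.num - 1 = 0 := by
        have : (t.num:ℚ)^3 + 2*(t.num:ℚ)^2 + (t.num:ℚ) - 1 = 0 := by
          rw [htint]; push_cast at htq; linarith
        exact_mod_cast this
      rcases le_or_gt t.num 0 with h1 | h1
      · nlinarith [sq_nonneg (t.num+1)]
      · nlinarith [sq_nonneg (t.num-1), sq_nonneg t.num]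

def pqr : ℕ → ℤ × ℤ × ℤ
  | 0 => (0, 0, 1)
  | n+1 => ((pqr n).1 + (pqr n).2.1, (pqr n).2.2, (pqr n).1)

lemma pqr_spec (α : ℝ) (hroot : α ^ 3 = α ^ 2 + 1) :
    ∀ n : ℕ, α^n = ((pqr n).1:ℝ)*α^2 + ((pqr n).2.1:ℝ)*α + ((pqr n).2.2:ℝ) := by
  intro n
  induction n with
  | zero => simp [pqr]
  | succ n ih =>
    simp only [pqr]
    push_cast
    linear_combination α * ih + ((pqr n).1:ℝ) * hroot

lemma pqr_nonneg : ∀ n : ℕ, 0 ≤ (pqr n).1 ∧ 0 ≤ (pqr n).2.1 ∧ 0 ≤ (pqr n).2.2 := by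
  intro n
  induction n with
  | zero => simp [pqr]
  | succ n ih => obtain ⟨h1,h2,h3⟩ := ih; exact ⟨by simp [pqr]; linarith, by simp [pqr, h3], by simp [pqr, h1]⟩

lemma p_pos : ∀ n : ℕ, 1 ≤ (pqr (n+2)).1 := by
  intro n
  induction n with
  | zero => simp [pqr]
  | succ n ih =>
    have h := (pqr_nonneg (n+2)).2.1
    show 1 ≤ (pqr (n+2)).1 + (pqr (n+2)).2.1
    linarith

lemma q_eq (n : ℕ) : (pqr (n+2)).2.1 = (pqr n).1 := rfl


theorem Lambda_two_ne_zero
    (α : ℝ) (hroot : α ^ 3 = α ^ 2 + 1) (hα : 1 < α)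
    (a : ℝ) (ha : a = α ^ 2 / (α ^ 3 + 2))
    (n ρ ℓ m k d1 d2 : ℕ) (hρ : 2 ≤ ρ) (hℓ : 1 ≤ ℓ) (hm : 1 ≤ m) (hk : 1 ≤ k)
    (hd1 : 1 ≤ d1) (hd1' : d1 ≤ ρ - 1) (hd2 : d2 ≤ ρ - 1) :
    ((ρ : ℝ) - 1) * a * α ^ n ≠
      ((d1 : ℝ) * (ρ : ℝ) ^ ℓ - ((d1 : ℝ) - (d2 : ℝ))) * (ρ : ℝ) ^ (m + k) := by
  intro heq
  have hα0 : (0:ℝ) < α := lt_trans one_pos hα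
  have hne : (0:ℝ) < α^3 + 2 := by positivity
  have hRcast : (((((d1:ℤ)*(ρ:ℤ)^ℓ - ((d1:ℤ)-(d2:ℤ)))*(ρ:ℤ)^(m+k)) : ℤ):ℝ)
      = ((d1 : ℝ) * (ρ : ℝ) ^ ℓ - ((d1 : ℝ) - (d2 : ℝ))) * (ρ : ℝ) ^ (m + k) := by
    push_cast; ring
  set R' : ℤ := ((d1:ℤ)*(ρ:ℤ)^ℓ - ((d1:ℤ)-(d2:ℤ)))*(ρ:ℤ)^(m+k) with hR'
  -- positivity of R'
  have hρ2 : (2:ℤ) ≤ (ρ:ℤ) := by exact_mod_cast hρ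
  have hd1z : (1:ℤ) ≤ (d1:ℤ) := by exact_mod_cast hd1
  have hd2z : (0:ℤ) ≤ (d2:ℤ) := Int.ofNat_nonneg d2
  have hpow : (ρ:ℤ) ≤ (ρ:ℤ)^ℓ := by
    calc (ρ:ℤ) = (ρ:ℤ)^1 := (pow_one _).symm
    _ ≤ (ρ:ℤ)^ℓ := pow_le_pow_right₀ (by linarith) hℓ
  have hpk : (0:ℤ) < (ρ:ℤ)^(m+k) := by positivity
  have hR'pos : 0 < R' := by
    rw [hR']
    have h1 : (d1:ℤ) + (d2:ℤ) ≤ (d1:ℤ)*(ρ:ℤ)^ℓ - ((d1:ℤ)-(d2:ℤ)) := by nlinarith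
    have h2 : (0:ℤ) < (d1:ℤ)*(ρ:ℤ)^ℓ - ((d1:ℤ)-(d2:ℤ)) := by linarith
    exact mul_pos h2 hpk
  -- main equation
  rw [ha] at heq
  rw [← hRcast] at heq
  have hne' : α^3 + 2 ≠ 0 := ne_of_gt hne
  have heqR : ((ρ:ℝ)-1) * α^2 * α^n = (R':ℝ) * (α^3+2) := by
    field_simp at heq
    linarith [heq]
  have heq2 : ((ρ:ℝ)-1)*α^(n+2) = (R':ℝ)*(α^2+3) := by
    linear_combination heqR + (R':ℝ)*hroot
  have hspec := pqr_spec α hroot (n+2)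
  have h0 : ((((ρ:ℤ)-1)*(pqr (n+2)).1 - R' : ℤ):ℝ)*α^2 + ((((ρ:ℤ)-1)*(pqr (n+2)).2.1 : ℤ):ℝ)*α
      + ((((ρ:ℤ)-1)*(pqr (n+2)).2.2 - 3*R' : ℤ):ℝ) = 0 := by
    push_cast
    linear_combination heq2 - ((ρ:ℝ)-1)*hspec
  obtain ⟨h1, h2, h3⟩ := lin_indep α hroot _ _ _ h0
  have hc : (1:ℤ) ≤ (ρ:ℤ)-1 := by linarith
  have hQ : (pqr (n+2)).2.1 = 0 := by
    rcases mul_eq_zero.mp h2 with h | h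
    · exact absurd h (by linarith)
    · exact h
  rcases n with _ | _ | n
  · have hP : (pqr (0+2)).1 = 1 := by decide
    have hRr : (pqr (0+2)).2.2 = 0 := by decide
    rw [hP] at h1; rw [hRr] at h3
    have : R' = (ρ:ℤ) - 1 := by linarith
    have : 3*R' = 0 := by linarith
    linarith
  · have hP : (pqr (1+2)).1 = 1 := by decide
    have hRr : (pqr (1+2)).2.2 = 1 := by decide
    rw [hP] at h1; rw [hRr] at h3
    have e1 : R' = (ρ:ℤ) - 1 := by linarith
    have e2 : 3*R' = (ρ:ℤ) - 1 := by linarith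
    linarith
  · have hq : (pqr (n+2+2)).2.1 = (pqr (n+2)).1 := rfl
    have := p_pos n
    rw [hq] at hQ
    linarith
end

section
/- Let ρ ≥ 2 be an integer, let α be the unique real root of x³ − x² − 1, and set a = α²/(α³ + 2). Suppose the nonnegative integers n, d1, d2, d3, ℓ, m, k satisfy n > 560, 1 ≤ k ≤ m ≤ ℓ, d1, d2, d3 ∈ {0, 1, …, ρ−1}, d1 > 0, and (ρ−1)·𝒩_n = d1·ρ^{ℓ+m+k} − (d1−d2)·ρ^{m+k} − (d2−d3)·ρ^k − d3. Then |((ρ−1)·a/d1)·αⁿ·ρ^{−(ℓ+m+k)} − 1| < 3/ρ^{ℓ−1}. -/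
/-- Error term in the Binet-type approximation of the Narayana sequence. -/
noncomputable def nerr (α a : ℝ) (j : ℕ) : ℝ := (narayana j : ℝ) - a * α ^ j

lemma nerr_rec3 (α a : ℝ) (hroot : α ^ 3 = α ^ 2 + 1) (j : ℕ) :
    nerr α a (j + 3) = nerr α a (j + 2) + nerr α a j := by
  unfold nerr
  have h1 : (narayana (j + 3) : ℝ) = (narayana (j + 2) : ℝ) + (narayana j : ℝ) := by
    rw [show narayana (j + 3) = narayana (j + 2) + narayana j from rfl]; push_cast; ring
  have h2 : α ^ (j + 3) = α ^ (j + 2) + α ^ j := by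
    calc α ^ (j + 3) = α ^ j * α ^ 3 := by ring
    _ = α ^ j * (α ^ 2 + 1) := by rw [hroot]
    _ = α ^ (j + 2) + α ^ j := by ring
  rw [h1, h2]; ring

lemma nerr_rec2 (α a : ℝ) (hroot : α ^ 3 = α ^ 2 + 1) (hα : 1 < α)
    (ha : a = α ^ 2 / (α ^ 3 + 2)) (j : ℕ) :
    nerr α a (j + 2) = (1 - α) * nerr α a (j + 1) - nerr α a j / α := by
  have hα0 : (0:ℝ) < α := by linarith
  have hne : α ≠ 0 := ne_of_gt hα0
  have hd : α ^ 3 + 2 ≠ 0 := by positivity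
  have hA : a * (α ^ 3 + 2) = α ^ 2 := by rw [ha]; field_simp
  induction j with
  | zero =>
    show nerr α a 2 = (1 - α) * nerr α a 1 - nerr α a 0 / α
    unfold nerr
    norm_num [show narayana 2 = 1 from rfl, show narayana 1 = 1 from rfl,
      show narayana 0 = 0 from rfl]
    field_simp
    ring_nf
    linear_combination -hA - a * hroot
  | succ j ih =>
    have h3 := nerr_rec3 α a hroot j
    have hj : nerr α a j = α * ((1 - α) * nerr α a (j + 1) - nerr α a (j + 2)) := by
      field_simp at ih
      linear_combination ih
    show nerr α a (j + 3) = (1 - α) * nerr α a (j + 2) - nerr α a (j + 1) / α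
    rw [h3, hj]
    field_simp
    linear_combination (-(nerr α a (j+1))) * hroot

set_option maxHeartbeats 1000000 in
lemma nerr_bound (α a : ℝ) (hroot : α ^ 3 = α ^ 2 + 1) (hα : 1 < α)
    (ha : a = α ^ 2 / (α ^ 3 + 2)) (j : ℕ) :
    |nerr α a (j + 1)| ≤ 1 := by
  have hα0 : (0:ℝ) < α := by linarith
  have hne : α ≠ 0 := ne_of_gt hα0
  have hlb : (1.465:ℝ) < α := by nlinarith [sq_nonneg (α - 1.465), sq_nonneg (α - 1), sq_nonneg α]
  have hub : α < 1.466 := by nlinarith [sq_nonneg (α - 1.466), sq_nonneg (α - 1), sq_nonneg α]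
  have hd : α ^ 3 + 2 ≠ 0 := by positivity
  have hA : a * (α ^ 3 + 2) = α ^ 2 := by rw [ha]; field_simp
  have hsq : (2.146:ℝ) < α ^ 2 ∧ α ^ 2 < 2.15 := by constructor <;> nlinarith
  have hA2 : a * (α ^ 2 + 3) = α ^ 2 := by linear_combination hA - a * hroot
  have halb : (0.41:ℝ) < a := by nlinarith [hsq.1, hsq.2]
  have haub : a < 0.42 := by nlinarith [hsq.1, hsq.2]
  set Q : ℕ → ℝ := fun i =>
    nerr α a (i+1)^2 + (α-1) * nerr α a i * nerr α a (i+1) + (nerr α a i)^2 / α with hQdef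
  have hstep : ∀ i, Q (i+1) = Q i / α := by
    intro i
    simp only [hQdef]
    rw [show i+1+1 = i+2 from rfl, nerr_rec2 α a hroot hα ha i]
    field_simp
    ring
  have hc : (0.9:ℝ) ≤ 1 - α * (α-1)^2 / 4 := by nlinarith
  have hlow : ∀ i, (1 - α * (α-1)^2 / 4) * (nerr α a (i+1))^2 ≤ Q i := by
    intro i
    simp only [hQdef]
    have hdiv : (nerr α a i)^2 / α * α = (nerr α a i)^2 := by field_simp
    nlinarith [sq_nonneg (nerr α a i + α * (α-1) * nerr α a (i+1) / 2), hα0,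
      sq_nonneg (nerr α a (i+1)), sq_nonneg (nerr α a i)]
  have hQnonneg : ∀ i, 0 ≤ Q i := by
    intro i
    have h1 := hlow i
    have h2 : (0:ℝ) ≤ (1 - α * (α-1)^2 / 4) * (nerr α a (i+1))^2 :=
      mul_nonneg (by linarith) (sq_nonneg _)
    exact le_trans h2 h1
  have hmono : ∀ i, Q i ≤ Q 0 := by
    intro i
    induction i with
    | zero => exact le_refl _
    | succ i ih =>
      rw [hstep i]
      calc Q i / α ≤ Q i := div_le_self (hQnonneg i) (le_of_lt hα)
      _ ≤ Q 0 := ih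
  have hQ0 : Q 0 ≤ 0.9 := by
    simp only [hQdef]
    have h0 : nerr α a 0 = -a := by
      unfold nerr; norm_num [show narayana 0 = 0 from rfl]
    have h1 : nerr α a 1 = 1 - a * α := by
      unfold nerr; norm_num [show narayana 1 = 1 from rfl]
    rw [h0, h1]
    have hdd : (-a)^2 / α ≤ a^2 := by
      rw [show (-a)^2 = a^2 by ring]
      exact div_le_self (sq_nonneg a) (le_of_lt hα)
    nlinarith
  have key : (nerr α a (j+1))^2 ≤ 1 := by
    have h1 := hlow j
    have h2 := hmono j
    have h3 : (0:ℝ) ≤ (1 - α * (α-1)^2 / 4 - 0.9) * (nerr α a (j+1))^2 :=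
      mul_nonneg (by linarith) (sq_nonneg _)
    have h4 : (1 - α * (α-1)^2/4) * (nerr α a (j+1))^2 ≤ 0.9 :=
      le_trans h1 (le_trans h2 hQ0)
    linarith only [h3, h4]
  rw [abs_le]
  constructor <;> nlinarith [key]

set_option maxHeartbeats 1000000 in
theorem Lambda_one_bound
    (ρ n d1 d2 d3 ℓ m k : ℕ) (α : ℝ)
    (hroot : α ^ 3 = α ^ 2 + 1) (hα : 1 < α)
    (a : ℝ) (ha : a = α ^ 2 / (α ^ 3 + 2))
    (hρ : 2 ≤ ρ) (hn : 560 < n)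
    (hk : 1 ≤ k) (hkm : k ≤ m) (hmℓ : m ≤ ℓ)
    (hd1pos : 0 < d1) (hd1 : d1 < ρ) (hd2 : d2 < ρ) (hd3 : d3 < ρ)
    (heq : ((ρ : ℤ) - 1) * (narayana n : ℤ) =
        (d1 : ℤ) * (ρ : ℤ) ^ (ℓ + m + k) - ((d1 : ℤ) - (d2 : ℤ)) * (ρ : ℤ) ^ (m + k)
          - ((d2 : ℤ) - (d3 : ℤ)) * (ρ : ℤ) ^ k - (d3 : ℤ)) :
    |((ρ : ℝ) - 1) * a / (d1 : ℝ) * α ^ n * (ρ : ℝ) ^ (-((ℓ + m + k : ℕ) : ℤ)) - 1| <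
      3 / (ρ : ℝ) ^ (ℓ - 1) := by
  have hα0 : (0:ℝ) < α := by linarith
  have hρR : (2:ℝ) ≤ (ρ:ℝ) := by exact_mod_cast hρ
  have hρ0 : (0:ℝ) < (ρ:ℝ) := by linarith
  have hρne : (ρ:ℝ) ≠ 0 := ne_of_gt hρ0
  have hd1R : (1:ℝ) ≤ (d1:ℝ) := by exact_mod_cast hd1pos
  have hd1R0 : (0:ℝ) < (d1:ℝ) := by linarith
  have hd1ne : (d1:ℝ) ≠ 0 := ne_of_gt hd1R0
  have hPL : (0:ℝ) < (ρ:ℝ) ^ (ℓ + m + k) := by positivity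
  have hzpow : (ρ:ℝ) ^ (-((ℓ + m + k : ℕ) : ℤ)) = ((ρ:ℝ) ^ (ℓ + m + k))⁻¹ := by
    rw [zpow_neg, zpow_natCast]
  -- cast the Diophantine relation to ℝ
  have heqR : ((ρ:ℝ) - 1) * (narayana n : ℝ) =
      (d1:ℝ) * (ρ:ℝ) ^ (ℓ + m + k) - ((d1:ℝ) - (d2:ℝ)) * (ρ:ℝ) ^ (m + k)
        - ((d2:ℝ) - (d3:ℝ)) * (ρ:ℝ) ^ k - (d3:ℝ) := by
    have := congrArg (fun z : ℤ => (z : ℝ)) heq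
    push_cast at this
    convert this using 2 <;> push_cast <;> ring
  -- bound on the error term
  have hern : |nerr α a n| ≤ 1 := by
    obtain ⟨n', rfl⟩ : ∃ n', n = n' + 1 := ⟨n - 1, by omega⟩
    exact nerr_bound α a hroot hα ha n'
  have hnar : (narayana n : ℝ) = a * α ^ n + nerr α a n := by unfold nerr; ring
  -- numerator identity
  have hval : ((ρ:ℝ) - 1) * a * α ^ n - (d1:ℝ) * (ρ:ℝ) ^ (ℓ + m + k)
      = -(((d1:ℝ) - (d2:ℝ)) * (ρ:ℝ) ^ (m + k) + ((d2:ℝ) - (d3:ℝ)) * (ρ:ℝ) ^ k + (d3:ℝ))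
        - ((ρ:ℝ) - 1) * nerr α a n := by
    linear_combination heqR - ((ρ:ℝ) - 1) * hnar
  have hT : ((ρ:ℝ) - 1) * a / (d1:ℝ) * α ^ n * (ρ:ℝ) ^ (-((ℓ + m + k : ℕ) : ℤ)) - 1
      = (((ρ:ℝ) - 1) * a * α ^ n - (d1:ℝ) * (ρ:ℝ) ^ (ℓ + m + k))
        / ((d1:ℝ) * (ρ:ℝ) ^ (ℓ + m + k)) := by
    rw [hzpow]
    field_simp
  rw [hT, hval]
  -- bound the numerator
  set N : ℝ := -(((d1:ℝ) - (d2:ℝ)) * (ρ:ℝ) ^ (m + k) + ((d2:ℝ) - (d3:ℝ)) * (ρ:ℝ) ^ k + (d3:ℝ))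
      - ((ρ:ℝ) - 1) * nerr α a n with hNdef
  have hd1b : (d1:ℝ) ≤ (ρ:ℝ) - 1 := by
    have : (d1:ℝ) + 1 ≤ (ρ:ℝ) := by exact_mod_cast hd1
    linarith
  have hd2b : (d2:ℝ) ≤ (ρ:ℝ) - 1 := by
    have : (d2:ℝ) + 1 ≤ (ρ:ℝ) := by exact_mod_cast hd2
    linarith
  have hd3b : (d3:ℝ) ≤ (ρ:ℝ) - 1 := by
    have : (d3:ℝ) + 1 ≤ (ρ:ℝ) := by exact_mod_cast hd3
    linarith
  have hd2nn : (0:ℝ) ≤ (d2:ℝ) := Nat.cast_nonneg _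
  have hd3nn : (0:ℝ) ≤ (d3:ℝ) := Nat.cast_nonneg _
  have hpmk : (0:ℝ) < (ρ:ℝ) ^ (m + k) := by positivity
  have hpk : (0:ℝ) < (ρ:ℝ) ^ k := by positivity
  have hkmk : (ρ:ℝ) ^ k ≤ (ρ:ℝ) ^ (m + k) :=
    pow_le_pow_right₀ (by linarith) (by omega)
  have habs1 : |((d1:ℝ) - (d2:ℝ))| ≤ (ρ:ℝ) - 1 := by
    rw [abs_le]; constructor <;> linarith
  have habs2 : |((d2:ℝ) - (d3:ℝ))| ≤ (ρ:ℝ) - 1 := by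
    rw [abs_le]; constructor <;> linarith
  have hNb : |N| < 3 * (ρ:ℝ) ^ (m + k + 1) := by
    have h1 : |N| ≤ |((d1:ℝ) - (d2:ℝ))| * (ρ:ℝ) ^ (m + k)
        + |((d2:ℝ) - (d3:ℝ))| * (ρ:ℝ) ^ k + (d3:ℝ) + ((ρ:ℝ) - 1) * |nerr α a n| := by
      rw [hNdef]
      calc |(-(((d1:ℝ) - (d2:ℝ)) * (ρ:ℝ) ^ (m + k) + ((d2:ℝ) - (d3:ℝ)) * (ρ:ℝ) ^ k + (d3:ℝ))
            - ((ρ:ℝ) - 1) * nerr α a n)|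
          ≤ |(((d1:ℝ) - (d2:ℝ)) * (ρ:ℝ) ^ (m + k) + ((d2:ℝ) - (d3:ℝ)) * (ρ:ℝ) ^ k + (d3:ℝ))|
            + |((ρ:ℝ) - 1) * nerr α a n| := by
            rw [show (-(((d1:ℝ) - (d2:ℝ)) * (ρ:ℝ) ^ (m + k) + ((d2:ℝ) - (d3:ℝ)) * (ρ:ℝ) ^ k
              + (d3:ℝ)) - ((ρ:ℝ) - 1) * nerr α a n)
              = -((((d1:ℝ) - (d2:ℝ)) * (ρ:ℝ) ^ (m + k) + ((d2:ℝ) - (d3:ℝ)) * (ρ:ℝ) ^ k + (d3:ℝ))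
              + ((ρ:ℝ) - 1) * nerr α a n) by ring, abs_neg]
            exact abs_add_le _ _
        _ ≤ |((d1:ℝ) - (d2:ℝ))| * (ρ:ℝ) ^ (m + k)
            + |((d2:ℝ) - (d3:ℝ))| * (ρ:ℝ) ^ k + (d3:ℝ) + ((ρ:ℝ) - 1) * |nerr α a n| := by
            have e1 : |(((d1:ℝ) - (d2:ℝ)) * (ρ:ℝ) ^ (m + k) + ((d2:ℝ) - (d3:ℝ)) * (ρ:ℝ) ^ k
                + (d3:ℝ))| ≤ |((d1:ℝ) - (d2:ℝ))| * (ρ:ℝ) ^ (m + k)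
                + |((d2:ℝ) - (d3:ℝ))| * (ρ:ℝ) ^ k + (d3:ℝ) := by
              calc _ ≤ |((d1:ℝ) - (d2:ℝ)) * (ρ:ℝ) ^ (m + k) + ((d2:ℝ) - (d3:ℝ)) * (ρ:ℝ) ^ k|
                  + |(d3:ℝ)| := abs_add_le _ _
                _ ≤ _ := by
                  have := abs_add_le (((d1:ℝ) - (d2:ℝ)) * (ρ:ℝ) ^ (m + k))
                    (((d2:ℝ) - (d3:ℝ)) * (ρ:ℝ) ^ k)
                  rw [abs_mul, abs_mul, abs_of_pos hpmk, abs_of_pos hpk] at this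
                  rw [abs_of_nonneg hd3nn]
                  linarith
            have e2 : |((ρ:ℝ) - 1) * nerr α a n| = ((ρ:ℝ) - 1) * |nerr α a n| := by
              rw [abs_mul, abs_of_nonneg (by linarith : (0:ℝ) ≤ (ρ:ℝ) - 1)]
            rw [e2]
            linarith
    have h2 : |((d1:ℝ) - (d2:ℝ))| * (ρ:ℝ) ^ (m + k) ≤ ((ρ:ℝ) - 1) * (ρ:ℝ) ^ (m + k) :=
      mul_le_mul_of_nonneg_right habs1 (le_of_lt hpmk)
    have h3 : |((d2:ℝ) - (d3:ℝ))| * (ρ:ℝ) ^ k ≤ ((ρ:ℝ) - 1) * (ρ:ℝ) ^ (m + k) := by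
      calc |((d2:ℝ) - (d3:ℝ))| * (ρ:ℝ) ^ k ≤ ((ρ:ℝ) - 1) * (ρ:ℝ) ^ k :=
          mul_le_mul_of_nonneg_right habs2 (le_of_lt hpk)
        _ ≤ ((ρ:ℝ) - 1) * (ρ:ℝ) ^ (m + k) :=
          mul_le_mul_of_nonneg_left hkmk (by linarith)
    have h4 : (d3:ℝ) + ((ρ:ℝ) - 1) * |nerr α a n| ≤ 2 * ((ρ:ℝ) - 1) := by
      have := mul_le_mul_of_nonneg_left hern (by linarith : (0:ℝ) ≤ (ρ:ℝ) - 1)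
      linarith
    have h5 : 2 * ((ρ:ℝ) - 1) < (ρ:ℝ) ^ (m + k) := by
      have hmk2 : 2 ≤ m + k := by omega
      have hp2 : (ρ:ℝ) ^ 2 ≤ (ρ:ℝ) ^ (m + k) := pow_le_pow_right₀ (by linarith) hmk2
      have hq : (2:ℝ) * (ρ:ℝ) ≤ (ρ:ℝ) ^ 2 := by
        have h := mul_le_mul_of_nonneg_right hρR (le_of_lt hρ0)
        calc (2:ℝ) * (ρ:ℝ) ≤ (ρ:ℝ) * (ρ:ℝ) := h
        _ = (ρ:ℝ) ^ 2 := (sq (ρ:ℝ)).symm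
      linarith only [hq, hp2, hρ0, hρR]
    have h6 : (ρ:ℝ) ^ (m + k + 1) = (ρ:ℝ) * (ρ:ℝ) ^ (m + k) := by ring
    calc |N| ≤ ((ρ:ℝ) - 1) * (ρ:ℝ) ^ (m + k) + ((ρ:ℝ) - 1) * (ρ:ℝ) ^ (m + k)
          + 2 * ((ρ:ℝ) - 1) := by linarith
      _ < 2 * ((ρ:ℝ) - 1) * (ρ:ℝ) ^ (m + k) + (ρ:ℝ) ^ (m + k) := by linarith
      _ ≤ 3 * (ρ:ℝ) ^ (m + k + 1) := by
          rw [h6]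
          have h7 : (2 * (ρ:ℝ) - 1) * (ρ:ℝ) ^ (m + k) ≤ 3 * (ρ:ℝ) * (ρ:ℝ) ^ (m + k) :=
            mul_le_mul_of_nonneg_right (by linarith) (le_of_lt hpmk)
          linarith only [h7]
  -- final division step
  have hsplit : (ρ:ℝ) ^ (ℓ + m + k) = (ρ:ℝ) ^ (ℓ - 1) * (ρ:ℝ) ^ (m + k + 1) := by
    rw [← pow_add]
    congr 1
    omega
  have hPl1 : (0:ℝ) < (ρ:ℝ) ^ (ℓ - 1) := by positivity
  rw [abs_div, abs_of_pos (mul_pos hd1R0 hPL), div_lt_div_iff₀ (mul_pos hd1R0 hPL) hPl1]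
  calc |N| * (ρ:ℝ) ^ (ℓ - 1) < 3 * (ρ:ℝ) ^ (m + k + 1) * (ρ:ℝ) ^ (ℓ - 1) :=
      mul_lt_mul_of_pos_right hNb hPl1
    _ = 3 * ((ρ:ℝ) ^ (ℓ + m + k)) := by rw [hsplit]; ring
    _ ≤ 3 * ((d1:ℝ) * (ρ:ℝ) ^ (ℓ + m + k)) := by
        have h8 : 1 * (ρ:ℝ) ^ (ℓ + m + k) ≤ (d1:ℝ) * (ρ:ℝ) ^ (ℓ + m + k) :=
          mul_le_mul_of_nonneg_right hd1R (le_of_lt hPL)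
        linarith only [h8]
end

section
/- Let ρ ≥ 2 be an integer, let α be the unique real root of x³ − x² − 1, and set a = α²/(α³ + 2). Suppose the nonnegative integers n, d1, d2, d3, ℓ, m, k satisfy n > 560, 1 ≤ k ≤ m ≤ ℓ, d1, d2, d3 ∈ {0, 1, …, ρ−1}, d1 > 0, and (ρ−1)·𝒩_n = d1·ρ^{ℓ+m+k} − (d1−d2)·ρ^{m+k} − (d2−d3)·ρ^k − d3. Then |((ρ−1)·a/(d1·ρ^ℓ − (d1−d2)))·αⁿ·ρ^{−(m+k)} − 1| < 2/ρ^{m−1}. -/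
set_option maxHeartbeats 1000000 in
lemma narayana_err (α a : ℝ) (hroot : α ^ 3 = α ^ 2 + 1) (hα : 1 < α)
    (ha : a = α ^ 2 / (α ^ 3 + 2)) (N : ℕ) :
    (a * α ^ N - (narayana N : ℝ)) ^ 2 ≤ 1 := by
  have hα0 : (0:ℝ) < α := by linarith
  have h32 : α < 3/2 := by nlinarith
  have h146 : (1.46:ℝ) < α := by nlinarith
  have h147 : α < (1.47:ℝ) := by nlinarith
  have hden : α ^ 3 + 2 ≠ 0 := by positivity
  have haq : a * (α ^ 2 + 3) = α ^ 2 := by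
    have h2 : α ^ 2 + 1 + 2 ≠ 0 := by positivity
    rw [ha, hroot]; field_simp; ring
  set E : ℕ → ℝ := fun j => a * α ^ j - (narayana j : ℝ) with hE
  show E N ^ 2 ≤ 1
  have h3 : ∀ j, E (j+3) = E (j+2) + E j := by
    intro j
    simp only [hE, narayana]
    push_cast
    linear_combination (a * α ^ j) * hroot
  have rec2 : ∀ j, α * E (j+2) = (α - α^2) * E (j+1) - E j := by
    intro j
    induction j with
    | zero =>
      simp only [hE]
      norm_num [narayana]
      linear_combination haq + 2*a*hroot
    | succ i ih =>
      linear_combination α * h3 i + α * ih - E (i+1) * hroot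
  set Q : ℕ → ℝ := fun j => α * E (j+1)^2 + α*(α-1)*E (j+1)*E j + E j^2 with hQ
  clear_value E Q
  have hQrec : ∀ j, α * Q (j+1) = Q j := by
    intro j
    simp only [hQ]
    linear_combination (α * E (j+2) + ((α-α^2)*E (j+1) - E j) + α*(α-1)*E (j+1)) * rec2 j
  have hc : 3 ≤ 4*α - α^2*(α-1)^2 := by nlinarith
  have hQid : ∀ j, 4*α*Q j = (2*α*E (j+1) + α*(α-1)*E j)^2 + (4*α - α^2*(α-1)^2)*E j^2 := by
    intro j; simp only [hQ]; ring
  have hQnonneg : ∀ j, 0 ≤ Q j := by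
    intro j
    have h4 : 0 ≤ 4*α*Q j := by
      rw [hQid j]
      nlinarith [sq_nonneg (2*α*E (j+1) + α*(α-1)*E j), sq_nonneg (E j), hc]
    nlinarith [h4, hα0]
  have hQle : ∀ j, Q j ≤ Q 0 := by
    intro j
    induction j with
    | zero => exact le_refl _
    | succ i ih =>
      have h1 := hQrec i
      have h2 := hQnonneg (i+1)
      nlinarith
  have hE0 : E 0 = a := by simp [hE, narayana]
  have hE1 : E 1 = a * α - 1 := by simp [hE, narayana]
  have ha1 : (0.41:ℝ) < a := by nlinarith
  have ha2 : a < (0.43:ℝ) := by nlinarith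
  have hQ0 : Q 0 ≤ 1/2 := by
    simp only [hQ, hE0, hE1]
    nlinarith [sq_nonneg (a*α - 1), sq_nonneg a]
  have hQN : Q N ≤ 1/2 := le_trans (hQle N) hQ0
  have hb1 : (4*α - α^2*(α-1)^2) * E N^2 ≤ 4*α*Q N := by
    nlinarith [hQid N, sq_nonneg (2*α*E (N+1) + α*(α-1)*E N)]
  have hb2 : 4*α*Q N ≤ 2*α := by
    have h := mul_le_mul_of_nonneg_left hQN (le_of_lt hα0)
    nlinarith [h]
  nlinarith [hb1, hb2, hc, h147, sq_nonneg (E N)]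

set_option maxHeartbeats 1000000 in
theorem Lambda_two_bound
    (ρ n d1 d2 d3 ℓ m k : ℕ) (α : ℝ)
    (hroot : α ^ 3 = α ^ 2 + 1) (hα : 1 < α)
    (a : ℝ) (ha : a = α ^ 2 / (α ^ 3 + 2))
    (hρ : 2 ≤ ρ) (hn : 560 < n)
    (hk : 1 ≤ k) (hkm : k ≤ m) (hmℓ : m ≤ ℓ)
    (hd1pos : 0 < d1) (hd1 : d1 < ρ) (hd2 : d2 < ρ) (hd3 : d3 < ρ)
    (heq : ((ρ : ℤ) - 1) * (narayana n : ℤ) =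
        (d1 : ℤ) * (ρ : ℤ) ^ (ℓ + m + k) - ((d1 : ℤ) - (d2 : ℤ)) * (ρ : ℤ) ^ (m + k)
          - ((d2 : ℤ) - (d3 : ℤ)) * (ρ : ℤ) ^ k - (d3 : ℤ)) :
    |((ρ : ℝ) - 1) * a / ((d1 : ℝ) * (ρ : ℝ) ^ ℓ - ((d1 : ℝ) - (d2 : ℝ))) * α ^ n *
        (ρ : ℝ) ^ (-((m + k : ℕ) : ℤ)) - 1| < 2 / (ρ : ℝ) ^ (m - 1) := by
  have hρR : (2:ℝ) ≤ (ρ:ℝ) := by exact_mod_cast hρ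
  have hρ0 : (0:ℝ) < (ρ:ℝ) := by linarith
  have hm1 : 1 ≤ m := le_trans hk hkm
  have hℓ1 : 1 ≤ ℓ := le_trans hm1 hmℓ
  have heqR : ((ρ:ℝ) - 1) * (narayana n : ℝ) =
      (d1:ℝ) * (ρ:ℝ) ^ (ℓ + m + k) - ((d1:ℝ) - (d2:ℝ)) * (ρ:ℝ) ^ (m + k)
        - ((d2:ℝ) - (d3:ℝ)) * (ρ:ℝ) ^ k - (d3:ℝ) := by
    exact_mod_cast congrArg (Int.cast : ℤ → ℝ) heq
  rw [show ℓ + m + k = ℓ + (m + k) by omega, pow_add] at heqR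
  have hsq := narayana_err α a hroot hα ha n
  have hlo : -1 ≤ a * α ^ n - (narayana n : ℝ) := by nlinarith [hsq]
  have hhi : a * α ^ n - (narayana n : ℝ) ≤ 1 := by nlinarith [hsq]
  have hd1R : (1:ℝ) ≤ (d1:ℝ) := by exact_mod_cast hd1pos
  have hd2R : (0:ℝ) ≤ (d2:ℝ) := by positivity
  have hd2R' : (d2:ℝ) ≤ (ρ:ℝ) - 1 := by
    have : (d2:ℝ) + 1 ≤ (ρ:ℝ) := by exact_mod_cast hd2
    linarith
  have hd3R : (0:ℝ) ≤ (d3:ℝ) := by positivity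
  have hd3R' : (d3:ℝ) ≤ (ρ:ℝ) - 1 := by
    have : (d3:ℝ) + 1 ≤ (ρ:ℝ) := by exact_mod_cast hd3
    linarith
  have hρℓ : (2:ℝ) ≤ (ρ:ℝ) ^ ℓ := by
    calc (2:ℝ) ≤ (ρ:ℝ) := hρR
    _ = (ρ:ℝ) ^ 1 := (pow_one _).symm
    _ ≤ (ρ:ℝ) ^ ℓ := by apply pow_le_pow_right₀ (by linarith) hℓ1
  have hpk : (ρ:ℝ) ≤ (ρ:ℝ) ^ k := by
    calc (ρ:ℝ) = (ρ:ℝ) ^ 1 := (pow_one _).symm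
    _ ≤ (ρ:ℝ) ^ k := by apply pow_le_pow_right₀ (by linarith) hk
  have hpk0 : (0:ℝ) < (ρ:ℝ) ^ k := by positivity
  set N : ℝ := (narayana n : ℝ) with hN
  set D : ℝ := (d1:ℝ) * (ρ:ℝ) ^ ℓ - ((d1:ℝ) - (d2:ℝ)) with hD
  set P : ℝ := (ρ:ℝ) ^ (m + k) with hP
  set R : ℝ := ((d2:ℝ) - (d3:ℝ)) * (ρ:ℝ) ^ k + (d3:ℝ) with hR
  have hP0 : (0:ℝ) < P := by rw [hP]; positivity
  have hPsplit : P = (ρ:ℝ) ^ (m - 1) * (ρ:ℝ) ^ (k + 1) := by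
    rw [hP, ← pow_add]
    congr 1
    omega
  have hzpow : (ρ:ℝ) ^ (-((m + k : ℕ) : ℤ)) = P⁻¹ := by
    rw [hP, zpow_neg, zpow_natCast]
  clear_value N D P R
  have hD1 : (1:ℝ) ≤ D := by
    rw [hD]; nlinarith [hρℓ, hd1R, hd2R]
  have hD0 : (0:ℝ) < D := by linarith
  have hkey : ((ρ:ℝ) - 1) * N = D * P - R := by
    linear_combination heqR - P * hD + hR
  have hDP0 : (0:ℝ) < D * P := mul_pos hD0 hP0
  have hrewrite : ((ρ:ℝ) - 1) * a / D * α ^ n * (ρ:ℝ) ^ (-((m + k : ℕ) : ℤ)) - 1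
      = (((ρ:ℝ) - 1) * (a * α ^ n - N) - R) / (D * P) := by
    rw [hzpow, eq_div_iff (ne_of_gt hDP0)]
    field_simp
    linear_combination hkey
  rw [hrewrite]
  have hnum : |((ρ:ℝ) - 1) * (a * α ^ n - N) - R| < 2 * (ρ:ℝ) ^ (k + 1) := by
    rw [abs_lt]
    constructor
    · rw [hR, pow_succ]
      nlinarith [mul_nonneg (by linarith : (0:ℝ) ≤ (ρ:ℝ) - 1 - ((d2:ℝ) - (d3:ℝ))) (le_of_lt hpk0),
        hpk, hρR, hhi, hlo, hd3R']
    · rw [hR, pow_succ]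
      nlinarith [mul_nonneg (by linarith : (0:ℝ) ≤ (ρ:ℝ) - 1 + ((d2:ℝ) - (d3:ℝ))) (le_of_lt hpk0),
        hpk, hρR, hhi, hlo, hd3R]
  have hfinal : 2 * (ρ:ℝ) ^ (k + 1) / P = 2 / (ρ:ℝ) ^ (m - 1) := by
    rw [hPsplit]
    have h1 : (ρ:ℝ) ^ (m - 1) ≠ 0 := by positivity
    have h2 : (ρ:ℝ) ^ (k + 1) ≠ 0 := by positivity
    field_simp
  rw [abs_div, abs_of_pos hDP0]
  calc |((ρ:ℝ) - 1) * (a * α ^ n - N) - R| / (D * P)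
      ≤ |((ρ:ℝ) - 1) * (a * α ^ n - N) - R| / P := by
        gcongr
        nlinarith [hD1, hP0]
    _ < 2 * (ρ:ℝ) ^ (k + 1) / P := by gcongr
    _ = 2 / (ρ:ℝ) ^ (m - 1) := hfinal
end

section
/- Let ρ ≥ 2 be an integer, let α be the unique real root of x³ − x² − 1, and set a = α²/(α³ + 2). Suppose the nonnegative integers n, d1, d2, d3, ℓ, m, k satisfy n > 560, 1 ≤ k ≤ m ≤ ℓ, d1, d2, d3 ∈ {0, 1, …, ρ−1}, d1 > 0, and (ρ−1)·𝒩_n = d1·ρ^{ℓ+m+k} − (d1−d2)·ρ^{m+k} − (d2−d3)·ρ^k − d3. Then |((d1·ρ^{ℓ+m} − (d1−d2)·ρ^m − (d2−d3))/((ρ−1)·a))·α^{−n}·ρ^k − 1| < 5/αⁿ. -/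
noncomputable def Efun (a α : ℝ) (j : ℕ) : ℝ := (narayana j : ℝ) - a * α ^ j

lemma Efun_rec3 (a α : ℝ) (hroot : α ^ 3 = α ^ 2 + 1) (j : ℕ) :
    Efun a α (j + 3) = Efun a α (j + 2) + Efun a α j := by
  have h : narayana (j + 3) = narayana (j + 2) + narayana j := rfl
  simp only [Efun, h, Nat.cast_add, pow_add]
  linear_combination (-a * α ^ j) * hroot

lemma Efun_rec2 (a α : ℝ) (hroot : α ^ 3 = α ^ 2 + 1) (ha' : a * (3 * α - 2) = 1) :
    ∀ j, Efun a α (j + 2) = (1 - α) * Efun a α (j + 1) - (α ^ 2 - α) * Efun a α j := by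
  intro j
  induction j with
  | zero =>
      simp only [Efun, show narayana 2 = 1 from rfl, show narayana 1 = 1 from rfl,
        show narayana 0 = 0 from rfl, Nat.cast_one, Nat.cast_zero, pow_one, pow_zero]
      linear_combination (-α) * ha'
  | succ j ih =>
      have h3 := Efun_rec3 a α hroot j
      have hgoal : Efun a α (j + 1 + 2) = Efun a α (j + 3) := by norm_num
      rw [hgoal, h3]
      linear_combination α * ih - (Efun a α j) * hroot

lemma Efun_Q (a α : ℝ) (hroot : α ^ 3 = α ^ 2 + 1) (ha' : a * (3 * α - 2) = 1) :
    ∀ j, (Efun a α (j+1))^2 + (α-1) * Efun a α (j+1) * Efun a α j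
        + (α^2-α) * (Efun a α j)^2
      = (α^2-α)^j * ((Efun a α 1)^2 + (α-1) * Efun a α 1 * Efun a α 0
        + (α^2-α) * (Efun a α 0)^2) := by
  intro j
  induction j with
  | zero => simp
  | succ j ih =>
      have h2 := Efun_rec2 a α hroot ha' j
      have : Efun a α (j + 1 + 1) = Efun a α (j + 2) := by norm_num
      rw [this, pow_succ]
      linear_combination (Efun a α (j+2) - (α^2-α) * Efun a α j) * h2 + (α^2-α) * ih

set_option maxHeartbeats 1000000 in
theorem Lambda_three_bound
    (ρ n d1 d2 d3 ℓ m k : ℕ) (α : ℝ)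
    (hroot : α ^ 3 = α ^ 2 + 1) (hα : 1 < α)
    (a : ℝ) (ha : a = α ^ 2 / (α ^ 3 + 2))
    (hρ : 2 ≤ ρ) (hn : 560 < n)
    (hk : 1 ≤ k) (hkm : k ≤ m) (hmℓ : m ≤ ℓ)
    (hd1pos : 0 < d1) (hd1 : d1 < ρ) (hd2 : d2 < ρ) (hd3 : d3 < ρ)
    (heq : ((ρ : ℤ) - 1) * (narayana n : ℤ) =
        (d1 : ℤ) * (ρ : ℤ) ^ (ℓ + m + k) - ((d1 : ℤ) - (d2 : ℤ)) * (ρ : ℤ) ^ (m + k)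
          - ((d2 : ℤ) - (d3 : ℤ)) * (ρ : ℤ) ^ k - (d3 : ℤ)) :
    |((d1 : ℝ) * (ρ : ℝ) ^ (ℓ + m) - ((d1 : ℝ) - (d2 : ℝ)) * (ρ : ℝ) ^ m
          - ((d2 : ℝ) - (d3 : ℝ))) / (((ρ : ℝ) - 1) * a) * α ^ (-(n : ℤ)) * (ρ : ℝ) ^ k - 1| <
      5 / α ^ n := by
  -- numeric bounds on α
  have hα1 : α < 1.47 := by nlinarith [sq_nonneg α, sq_nonneg (α - 1.47), sq_nonneg (α + 1)]
  have hα0 : 1.46 < α := by nlinarith [sq_nonneg α, sq_nonneg (α - 1.46), sq_nonneg (α + 1)]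
  have hden : (0:ℝ) < α ^ 3 + 2 := by positivity
  have ha' : a * (3 * α - 2) = 1 := by
    rw [ha]
    field_simp
    linear_combination 2 * hroot
  have hapos : (0:ℝ) < a := by rw [ha]; positivity
  have ha0 : 0.41 < a := by
    nlinarith [ha', mul_pos hapos (show (0:ℝ) < 4.41 - 3 * α by linarith)]
  have ha1 : a < 0.43 := by
    nlinarith [ha', mul_pos hapos (show (0:ℝ) < 3 * α - 4.38 by linarith)]
  -- bound on |E n|
  have hq0 : (0:ℝ) < α ^ 2 - α := by nlinarith
  have hq1 : α ^ 2 - α < 0.71 := by nlinarith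
  have hQ := Efun_Q a α hroot ha' n
  have hE0 : Efun a α 0 = -a := by
    simp [Efun, show narayana 0 = 0 from rfl]
  have hE1 : Efun a α 1 = 1 - a * α := by
    simp [Efun, show narayana 1 = 1 from rfl]
  have hQ0 : (Efun a α 1)^2 + (α-1) * Efun a α 1 * Efun a α 0
      + (α^2-α) * (Efun a α 0)^2 ≤ 0.4 := by
    rw [hE0, hE1]
    have hu0 : (0:ℝ) < 1 - a * α := by nlinarith
    have hu1 : 1 - a * α < 0.41 := by nlinarith
    nlinarith [mul_nonneg (mul_nonneg (show (0:ℝ) ≤ α - 1 by linarith) hu0.le) hapos.le,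
      mul_pos hu0 (show (0:ℝ) < 0.41 - (1 - a*α) by linarith),
      mul_nonneg (show (0:ℝ) ≤ 0.71 - (α^2 - α) by linarith) (sq_nonneg a),
      mul_pos hapos (show (0:ℝ) < 0.43 - a by linarith)]
  have hqn : (α^2-α)^n ≤ α^2 - α := by
    calc (α^2-α)^n ≤ (α^2-α)^1 :=
      pow_le_pow_of_le_one (le_of_lt hq0) (by nlinarith) (by omega)
    _ = α^2 - α := pow_one _
  have hQn_le : (Efun a α (n+1))^2 + (α-1) * Efun a α (n+1) * Efun a α n
      + (α^2-α) * (Efun a α n)^2 ≤ 0.284 := by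
    rw [hQ]
    nlinarith [pow_nonneg hq0.le n,
      mul_le_mul_of_nonneg_left hQ0 (pow_nonneg hq0.le n)]
  have hcoef : (0.6:ℝ) ≤ (α^2-α) - (α-1)^2/4 := by nlinarith
  have hEn2 : (Efun a α n)^2 < 0.49 := by
    nlinarith [hQn_le, sq_nonneg (Efun a α (n+1) + (α-1)/2 * Efun a α n),
      mul_nonneg (show (0:ℝ) ≤ (α^2-α) - (α-1)^2/4 - 0.6 by linarith) (sq_nonneg (Efun a α n))]
  have hEn : |Efun a α n| < 0.7 := by
    rw [abs_lt]
    constructor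
    · nlinarith [sq_nonneg (Efun a α n + 0.7)]
    · nlinarith [sq_nonneg (Efun a α n - 0.7)]
  -- cast the integer equation
  have hR1 : (1:ℝ) ≤ (ρ:ℝ) - 1 := by
    have : (2:ℝ) ≤ (ρ:ℝ) := by exact_mod_cast hρ
    linarith
  have hd3R : (d3:ℝ) ≤ (ρ:ℝ) - 1 := by
    have : (d3:ℝ) + 1 ≤ (ρ:ℝ) := by exact_mod_cast hd3
    linarith
  have hd3nn : (0:ℝ) ≤ (d3:ℝ) := Nat.cast_nonneg _
  have heqR : ((ρ:ℝ) - 1) * (narayana n : ℝ) =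
      (d1:ℝ) * (ρ:ℝ) ^ (ℓ + m + k) - ((d1:ℝ) - (d2:ℝ)) * (ρ:ℝ) ^ (m + k)
        - ((d2:ℝ) - (d3:ℝ)) * (ρ:ℝ) ^ k - (d3:ℝ) := by exact_mod_cast heq
  have hXk : ((d1:ℝ) * (ρ:ℝ) ^ (ℓ + m) - ((d1:ℝ) - (d2:ℝ)) * (ρ:ℝ) ^ m
      - ((d2:ℝ) - (d3:ℝ))) * (ρ:ℝ) ^ k = ((ρ:ℝ) - 1) * (narayana n : ℝ) + (d3:ℝ) := by
    rw [heqR]; ring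
  have hαn : (0:ℝ) < α ^ n := by positivity
  have ha0' : (0:ℝ) < a := by linarith
  have hDpos : (0:ℝ) < ((ρ:ℝ) - 1) * a * α ^ n := by positivity
  rw [zpow_neg, zpow_natCast]
  have key : ((d1:ℝ) * (ρ:ℝ) ^ (ℓ + m) - ((d1:ℝ) - (d2:ℝ)) * (ρ:ℝ) ^ m
        - ((d2:ℝ) - (d3:ℝ))) / (((ρ:ℝ) - 1) * a) * (α ^ n)⁻¹ * (ρ:ℝ) ^ k - 1
      = (((ρ:ℝ) - 1) * Efun a α n + (d3:ℝ)) / (((ρ:ℝ) - 1) * a * α ^ n) := by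
    rw [Efun]
    field_simp
    linear_combination hXk
  rw [key, abs_div, abs_of_pos hDpos, div_lt_div_iff₀ hDpos hαn]
  have hnum : |((ρ:ℝ) - 1) * Efun a α n + (d3:ℝ)| < 5 * a * ((ρ:ℝ) - 1) := by
    rw [abs_lt] at hEn ⊢
    obtain ⟨hl, hr⟩ := hEn
    have hrpos : (0:ℝ) < (ρ:ℝ) - 1 := by linarith
    have h1 : ((ρ:ℝ)-1) * Efun a α n < ((ρ:ℝ)-1) * 0.7 :=
      mul_lt_mul_of_pos_left hr hrpos
    have h2 : ((ρ:ℝ)-1) * (-0.7) < ((ρ:ℝ)-1) * Efun a α n :=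
      mul_lt_mul_of_pos_left hl hrpos
    have h3 : 2.05 * ((ρ:ℝ)-1) ≤ 5 * a * ((ρ:ℝ)-1) :=
      mul_le_mul_of_nonneg_right (by linarith) (by linarith)
    constructor <;> linarith
  calc |((ρ:ℝ) - 1) * Efun a α n + (d3:ℝ)| * α ^ n
      < (5 * a * ((ρ:ℝ) - 1)) * α ^ n := mul_lt_mul_of_pos_right hnum hαn
    _ = 5 * (((ρ:ℝ) - 1) * a * α ^ n) := by ring
end
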